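/- (Fact: start with a selector) Every tiling of the plane by the constructed set B(T) of 29 Wang bars contains at least one placed bar belonging to the selector group. -/

import Mathlib

/-- A Wang tile: a quadruple (north, east, south, west) of colors (natural numbers). -/
abbrev WangTile : Type := ℕ × ℕ × ℕ × ℕ

def WangTile.north (t : WangTile) : ℕ := t.1
def WangTile.east  (t : WangTile) : ℕ := t.2.1
def WangTile.south (t : WangTile) : ℕ := t.2.2.1
def WangTile.west  (t : WangTile) : ℕ := t.2.2.2

/-- `f : ℤ × ℤ → WangTile` is a tiling of the plane by (translated copies of) tiles
of `T`: adjacent edges carry the same color. -/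
def IsWangTiling (T : Finset WangTile) (f : ℤ × ℤ → WangTile) : Prop :=
  (∀ p, f p ∈ T) ∧
  (∀ x y : ℤ, (f (x, y)).east = (f (x + 1, y)).west) ∧
  (∀ x y : ℤ, (f (x, y)).north = (f (x, y + 1)).south)

/-- The finite set `T` of Wang tiles tiles the plane. -/
def TilesPlane (T : Finset WangTile) : Prop := ∃ f, IsWangTiling T f

/-- A Wang bar: a list of top colors, a list of bottom colors (of the same positive
length `l`), a left color and a right color. -/
abbrev WangBar : Type := List ℕ × List ℕ × ℕ × ℕ

def WangBar.top    (b : WangBar) : List ℕ := b.1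
def WangBar.bottom (b : WangBar) : List ℕ := b.2.1
def WangBar.left   (b : WangBar) : ℕ := b.2.2.1
def WangBar.right  (b : WangBar) : ℕ := b.2.2.2

/-- The length of a Wang bar. -/
def WangBar.len (b : WangBar) : ℕ := b.1.length

/-- A genuine Wang bar has positive length and as many bottom colors as top colors. -/
def WangBar.IsValid (b : WangBar) : Prop := 0 < b.len ∧ b.top.length = b.bottom.length

/-- A tiling of the plane by translated copies of bars of `B`, recorded by the function
`f` sending each unit cell to the bar covering it together with the index of the cell
inside that bar.  The conditions say that the cells of one placed bar are consecutive
cells of one row, that colors of horizontally adjacent bars match at their common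
vertical unit segment, and that colors of vertically adjacent bars match at every
common horizontal unit segment. -/
def IsBarTiling (B : Finset WangBar) (f : ℤ × ℤ → WangBar × ℕ) : Prop :=
  (∀ p, (f p).1 ∈ B) ∧
  (∀ p, (f p).2 < (f p).1.len) ∧
  (∀ x y : ℤ, (f (x, y)).2 + 1 < (f (x, y)).1.len →
      f (x + 1, y) = ((f (x, y)).1, (f (x, y)).2 + 1)) ∧
  (∀ x y : ℤ, 0 < (f (x, y)).2 →
      f (x - 1, y) = ((f (x, y)).1, (f (x, y)).2 - 1)) ∧
  (∀ x y : ℤ, (f (x, y)).2 + 1 = (f (x, y)).1.len →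
      (f (x + 1, y)).2 = 0 ∧ (f (x, y)).1.right = (f (x + 1, y)).1.left) ∧
  (∀ x y : ℤ, (f (x, y)).1.top.getD (f (x, y)).2 0 =
      (f (x, y + 1)).1.bottom.getD (f (x, y + 1)).2 0)

/-- The finite set `B` of Wang bars tiles the plane. -/
def BarsTilePlane (B : Finset WangBar) : Prop := ∃ f, IsBarTiling B f

/-- The set of the (at most four) edge colors of a Wang tile. -/
def WangTile.colors (t : WangTile) : Finset ℕ := {t.north, t.east, t.south, t.west}

/-- The set of distinct colors occurring on the edges of tiles of `T`. -/
def tileSetColors (T : Finset WangTile) : Finset ℕ := T.biUnion WangTile.colors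

/-! ### The paper's construction of the set `B(T)` of 29 Wang bars
The construction uses the 20 new colors `a_1, …, a_8, b_1, …, b_8, x, y, z, 0`
together with six internal colors gluing the seven bars of the selector and the
internal colors `b_5, b_6, b_7, b_8` are among the `b`-colors. -/

def aCol (i : ℕ) : ℕ := i          -- the colors `a_1, …, a_8`
def bCol (i : ℕ) : ℕ := 8 + i      -- the colors `b_1, …, b_8`
def xCol : ℕ := 17                 -- the color `x`
def yCol : ℕ := 18                 -- the color `y`
def zCol : ℕ := 19                 -- the color `z`
def oCol : ℕ := 0                  -- the color `0`
def sCol (i : ℕ) : ℕ := 19 + i     -- the six internal colors of the selector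

/-- `n`: the number of tiles of `T`. -/
def nOf (T : Finset WangTile) : ℕ := T.card

/-- `m`: the number of distinct edge colors of `T`. -/
def mOf (T : Finset WangTile) : ℕ := (tileSetColors T).card

/-- The list of the `m` edge colors of `T`, in increasing order. -/
def colorList (T : Finset WangTile) : List ℕ := (tileSetColors T).sort (· ≤ ·)

/-- The unary index (position among the `m` colors of `T`) of an edge color. -/
def colorIdx (T : Finset WangTile) (c : ℕ) : ℕ := (colorList T).idxOf c

/-- Top side of an arm of an encoder section: all `m` cells carry `a_5` except the
single cell at position `pos`, which carries `a_3`. -/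
def armTop (m pos : ℕ) : List ℕ :=
  (List.range m).map fun i => if i = pos then aCol 3 else aCol 5

/-- Bottom side of an arm: all cells carry `a_6` except the cell at `pos` carrying `a_4`. -/
def armBot (m pos : ℕ) : List ℕ :=
  (List.range m).map fun i => if i = pos then aCol 4 else aCol 6

/-- Top side of the encoder section simulating the tile `t` (tilted by `π/4`):
left arm encoding the north color, the locator cell carrying `a_1`, and right arm
encoding the east color. -/
def sectionTop (T : Finset WangTile) (t : WangTile) : List ℕ :=
  armTop (mOf T) (colorIdx T t.north) ++ [aCol 1] ++ armTop (mOf T) (colorIdx T t.east)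

/-- Bottom side of the section simulating `t`: left arm encoding the west color,
the locator cell carrying `a_2`, and right arm encoding the south color. -/
def sectionBot (T : Finset WangTile) (t : WangTile) : List ℕ :=
  armBot (mOf T) (colorIdx T t.west) ++ [aCol 2] ++ armBot (mOf T) (colorIdx T t.south)

/-- (i) The encoder: one bar of length `n(2m+1)`, with one section of length `2m+1`
per tile of `T`, and left and right sides colored `z`. -/
noncomputable def encoderBar (T : Finset WangTile) : WangBar :=
  ((T.toList.map (sectionTop T)).flatten, (T.toList.map (sectionBot T)).flatten, zCol, zCol)

/-- (ii) The seven bars of the selector, glued by six distinct internal colors. -/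
def topPointer : WangBar := ([aCol 2], [sCol 1], oCol, oCol)
def selUpper2  : WangBar := ([sCol 1], [sCol 2], oCol, oCol)
def selUpper1  : WangBar := ([sCol 2], [sCol 3], xCol, yCol)
def selectorLong (T : Finset WangTile) : WangBar :=
  (List.replicate (mOf T) (aCol 7) ++ [sCol 3] ++ List.replicate (mOf T) (aCol 7),
   List.replicate (mOf T) (aCol 8) ++ [sCol 4] ++ List.replicate (mOf T) (aCol 8),
   zCol, zCol)
def selLower1  : WangBar := ([sCol 4], [sCol 5], xCol, yCol)
def selLower2  : WangBar := ([sCol 5], [sCol 6], oCol, oCol)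
def bottomPointer : WangBar := ([sCol 6], [aCol 1], oCol, oCol)

/-- The selector group. -/
def selectorBars (T : Finset WangTile) : Finset WangBar :=
  {topPointer, selUpper2, selUpper1, selectorLong T, selLower1, selLower2, bottomPointer}

/-- (iii) The aligner. -/
def alignerBar (T : Finset WangTile) : WangBar :=
  (List.replicate (2 * mOf T + 1) (aCol 5), List.replicate (2 * mOf T + 1) (aCol 6),
   zCol, zCol)

/-- The length `(n-1)(2m+1) + m + 1` of the two long linker bars. -/
def linkLen (T : Finset WangTile) : ℕ := (nOf T - 1) * (2 * mOf T + 1) + mOf T + 1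

/-- (iv) The linkers. -/
def linkA4B1 : WangBar := ([aCol 4], [bCol 1], oCol, oCol)
def linkB2A3 : WangBar := ([bCol 2], [aCol 3], oCol, oCol)
def longLinkA (T : Finset WangTile) : WangBar :=
  (bCol 1 :: List.replicate (linkLen T - 1) (bCol 3),
   List.replicate (linkLen T - 1) (bCol 4) ++ [bCol 2], yCol, xCol)
def longLinkB (T : Finset WangTile) : WangBar :=
  (List.replicate (linkLen T - 1) (bCol 3) ++ [bCol 1],
   bCol 2 :: List.replicate (linkLen T - 1) (bCol 4), yCol, xCol)

def linkerBars (T : Finset WangTile) : Finset WangBar :=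
  {linkA4B1, linkB2A3, longLinkA T, longLinkB T}

/-- (v) Group-1 fillers. -/
def group1Fillers : Finset WangBar :=
  { ([aCol 2], [bCol 3], oCol, oCol), ([aCol 4], [bCol 3], oCol, oCol),
    ([aCol 6], [bCol 3], oCol, oCol), ([aCol 8], [bCol 3], oCol, oCol),
    ([bCol 4], [aCol 1], oCol, oCol), ([bCol 4], [aCol 3], oCol, oCol),
    ([bCol 4], [aCol 5], oCol, oCol), ([bCol 4], [aCol 7], oCol, oCol) }

/-- (vi) Group-2 fillers. -/
def group2Fillers : Finset WangBar :=
  { ([aCol 8], [bCol 5], oCol, oCol), ([bCol 5], [bCol 6], xCol, xCol),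
    ([bCol 5], [bCol 6], yCol, yCol), ([bCol 6], [aCol 5], oCol, oCol),
    ([aCol 6], [bCol 7], oCol, oCol), ([bCol 7], [bCol 8], xCol, xCol),
    ([bCol 7], [bCol 8], yCol, yCol), ([bCol 8], [aCol 7], oCol, oCol) }

/-- The constructed set `B(T)` of 29 Wang bars. -/
noncomputable def barsOf (T : Finset WangTile) : Finset WangBar :=
  {encoderBar T} ∪ selectorBars T ∪ {alignerBar T} ∪ linkerBars T ∪
    group1Fillers ∪ group2Fillers

/-!
Record each cell of a bar tiling as the Wang tile whose north and south colors are those of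
the cell and whose east and west colors are the side colors of the bar containing it. The
tiles seen in a tiling form a nonempty self-supporting set: every tile has one above it with
a matching south color, one below it with a matching north color, and one with west color
equal to its east color (to the right of the bar's last cell). Without the selector these
tiles all lie in an explicit finite set, and repeatedly discarding unsupported tiles empties
it within five rounds: `a_7` and `a_8` occur only on the selector, which kills the group-2
fillers, then the side color `x` and with it the long linkers, then the colors `b_1, …, b_4`,
and finally `a_1, a_3, a_5`, the only top colors of the encoder and the aligner.
-/

def IsSelfSupporting (S : Set WangTile) : Prop :=
  ∀ t ∈ S, (∃ u ∈ S, u.south = t.north) ∧ (∃ u ∈ S, u.north = t.south) ∧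
    (∃ u ∈ S, u.west = t.east)

def pruneUnsupported (A : Finset WangTile) : Finset WangTile :=
  A.filter fun t => (∃ u ∈ A, u.south = t.north) ∧ (∃ u ∈ A, u.north = t.south) ∧
    (∃ u ∈ A, u.west = t.east)

theorem IsSelfSupporting.subset_pruneUnsupported {S : Set WangTile} {A : Finset WangTile}
    (hS : IsSelfSupporting S) (hA : S ⊆ A) : S ⊆ pruneUnsupported A := by
  intro t ht
  obtain ⟨⟨u, hu, hnorth⟩, ⟨v, hv, hsouth⟩, ⟨w, hw, heast⟩⟩ := hS t ht
  exact Finset.mem_filter.2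
    ⟨hA ht, ⟨u, hA hu, hnorth⟩, ⟨v, hA hv, hsouth⟩, ⟨w, hA hw, heast⟩⟩

theorem IsSelfSupporting.subset_pruneUnsupported_iterate {S : Set WangTile}
    {A : Finset WangTile} (hS : IsSelfSupporting S) (hA : S ⊆ A) (k : ℕ) :
    S ⊆ (pruneUnsupported^[k] A : Finset WangTile) := by
  induction k with
  | zero => exact hA
  | succ k ih =>
    rw [Function.iterate_succ_apply']
    exact hS.subset_pruneUnsupported ih

/-- `getD` reads a missing bottom color as `0`. -/
def WangBar.tileAt (b : WangBar) (i : ℕ) : WangTile :=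
  (b.top.getD i 0, b.right, b.bottom.getD i 0, b.left)

def cellTile (f : ℤ × ℤ → WangBar × ℕ) (p : ℤ × ℤ) : WangTile :=
  (f p).1.tileAt (f p).2

namespace IsBarTiling

variable {B : Finset WangBar} {f : ℤ × ℤ → WangBar × ℕ}

theorem exists_last_cell (hf : IsBarTiling B f) (x y : ℤ) :
    ∃ x', (f (x', y)).1 = (f (x, y)).1 ∧ (f (x', y)).2 + 1 = (f (x', y)).1.len := by
  obtain ⟨-, hidx, hstep, -⟩ := hf
  obtain ⟨k, hk⟩ := Nat.exists_eq_add_of_lt (hidx (x, y))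
  induction k generalizing x with
  | zero => exact ⟨x, rfl, hk.symm⟩
  | succ k ih =>
    have hnext := hstep x y (by omega)
    obtain ⟨x', hbar, hlast⟩ := ih (x + 1) (by rw [hnext]; dsimp only; omega)
    exact ⟨x', hbar.trans (by rw [hnext]), hlast⟩

theorem isSelfSupporting_range_cellTile (hf : IsBarTiling B f) :
    IsSelfSupporting (Set.range (cellTile f)) := by
  rintro _ ⟨⟨x, y⟩, rfl⟩
  obtain ⟨x', hbar, hlast⟩ := hf.exists_last_cell x y
  obtain ⟨-, -, -, -, hend, hvert⟩ := hf
  refine ⟨⟨_, ⟨(x, y + 1), rfl⟩, (hvert x y).symm⟩,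
    ⟨_, ⟨(x, y - 1), rfl⟩, ?_⟩, ?_⟩
  · have hbelow := hvert x (y - 1)
    rw [sub_add_cancel] at hbelow
    exact hbelow
  · refine ⟨_, ⟨(x' + 1, y), rfl⟩, ?_⟩
    show (f (x' + 1, y)).1.left = (f (x, y)).1.right
    rw [← hbar]
    exact (hend x' y hlast).2.symm

end IsBarTiling

/-- Contains every tile seen on a bar with top colors in `tops`, bottom colors in `bots` and
sides `l`, `r`; the extra bottom color `0` stands for a missing one. -/
def envelopeTiles (tops bots : Finset ℕ) (l r : ℕ) : Finset WangTile :=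
  (tops ×ˢ insert 0 bots).image fun c => (c.1, r, c.2, l)

theorem WangBar.tileAt_mem_envelopeTiles {b : WangBar} {tops bots : Finset ℕ}
    (htop : ∀ c ∈ b.top, c ∈ tops) (hbot : ∀ c ∈ b.bottom, c ∈ bots) {i : ℕ}
    (hi : i < b.len) : b.tileAt i ∈ envelopeTiles tops bots b.left b.right := by
  replace hi : i < b.top.length := hi
  refine Finset.mem_image.2 ⟨(b.top.getD i 0, b.bottom.getD i 0),
    Finset.mem_product.2 ⟨htop _ ?_, ?_⟩, rfl⟩
  · rw [List.getD_eq_getElem _ _ hi]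
    exact List.getElem_mem hi
  · rcases lt_or_ge i b.bottom.length with h | h
    · rw [List.getD_eq_getElem _ _ h]
      exact Finset.mem_insert_of_mem (hbot _ (List.getElem_mem h))
    · rw [List.getD_eq_default _ _ h]
      exact Finset.mem_insert_self _ _

theorem mem_armTop {m pos c : ℕ} (h : c ∈ armTop m pos) : c = aCol 3 ∨ c = aCol 5 := by
  simp only [armTop, List.mem_map] at h
  obtain ⟨i, -, rfl⟩ := h
  split_ifs <;> simp

theorem mem_armBot {m pos c : ℕ} (h : c ∈ armBot m pos) : c = aCol 4 ∨ c = aCol 6 := by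
  simp only [armBot, List.mem_map] at h
  obtain ⟨i, -, rfl⟩ := h
  split_ifs <;> simp

theorem mem_encoderBar_top {T : Finset WangTile} {c : ℕ} (h : c ∈ (encoderBar T).top) :
    c ∈ ({aCol 1, aCol 3, aCol 5} : Finset ℕ) := by
  simp only [encoderBar, WangBar.top, List.mem_flatten, List.mem_map] at h
  obtain ⟨_, ⟨t, -, rfl⟩, hc⟩ := h
  simp only [sectionTop, List.mem_append, List.mem_singleton] at hc
  rcases hc with (hc | rfl) | hc
  · rcases mem_armTop hc with rfl | rfl <;> simp
  · simp
  · rcases mem_armTop hc with rfl | rfl <;> simp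

theorem mem_encoderBar_bottom {T : Finset WangTile} {c : ℕ} (h : c ∈ (encoderBar T).bottom) :
    c ∈ ({aCol 2, aCol 4, aCol 6} : Finset ℕ) := by
  simp only [encoderBar, WangBar.bottom, List.mem_flatten, List.mem_map] at h
  obtain ⟨_, ⟨t, -, rfl⟩, hc⟩ := h
  simp only [sectionBot, List.mem_append, List.mem_singleton] at hc
  rcases hc with (hc | rfl) | hc
  · rcases mem_armBot hc with rfl | rfl <;> simp
  · simp
  · rcases mem_armBot hc with rfl | rfl <;> simp

def unitBars : Finset WangBar := {linkA4B1, linkB2A3} ∪ group1Fillers ∪ group2Fillers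

/-- The encoder's envelope also covers the aligner, and the long linkers share one. -/
def nonSelectorTiles : Finset WangTile :=
  envelopeTiles {aCol 1, aCol 3, aCol 5} {aCol 2, aCol 4, aCol 6} zCol zCol ∪
  envelopeTiles {bCol 1, bCol 3} {bCol 2, bCol 4} yCol xCol ∪
  unitBars.biUnion fun b => envelopeTiles b.top.toFinset b.bottom.toFinset b.left b.right

theorem pruneUnsupported_iterate_nonSelectorTiles :
    pruneUnsupported^[5] nonSelectorTiles = ∅ := by
  decide +kernel

namespace WangBar

variable {T : Finset WangTile} {i : ℕ}

theorem tileAt_mem_nonSelectorTiles_of_mem_unitBars {b : WangBar} (hb : b ∈ unitBars)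
    (hi : i < b.len) : b.tileAt i ∈ nonSelectorTiles :=
  Finset.mem_union_right _ <| Finset.mem_biUnion.2 ⟨b, hb,
    tileAt_mem_envelopeTiles (fun _ => List.mem_toFinset.2) (fun _ => List.mem_toFinset.2) hi⟩

theorem tileAt_encoderBar_mem_nonSelectorTiles (hi : i < (encoderBar T).len) :
    (encoderBar T).tileAt i ∈ nonSelectorTiles :=
  Finset.mem_union_left _ <| Finset.mem_union_left _ <|
    tileAt_mem_envelopeTiles (fun _ => mem_encoderBar_top) (fun _ => mem_encoderBar_bottom) hi

theorem tileAt_alignerBar_mem_nonSelectorTiles (hi : i < (alignerBar T).len) :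
    (alignerBar T).tileAt i ∈ nonSelectorTiles := by
  refine Finset.mem_union_left _ <| Finset.mem_union_left _ <|
    tileAt_mem_envelopeTiles (fun c hc => ?_) (fun c hc => ?_) hi
  · simp [(List.eq_of_mem_replicate hc : c = aCol 5)]
  · simp [(List.eq_of_mem_replicate hc : c = aCol 6)]

theorem tileAt_longLinkA_mem_nonSelectorTiles (hi : i < (longLinkA T).len) :
    (longLinkA T).tileAt i ∈ nonSelectorTiles := by
  refine Finset.mem_union_left _ <| Finset.mem_union_right _ <|
    tileAt_mem_envelopeTiles (fun c hc => ?_) (fun c hc => ?_) hi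
  · simp only [top, longLinkA, List.mem_cons, List.mem_replicate] at hc
    rcases hc with rfl | ⟨-, rfl⟩ <;> simp
  · simp only [bottom, longLinkA, List.mem_append, List.mem_replicate,
      List.mem_singleton] at hc
    rcases hc with ⟨-, rfl⟩ | rfl <;> simp

theorem tileAt_longLinkB_mem_nonSelectorTiles (hi : i < (longLinkB T).len) :
    (longLinkB T).tileAt i ∈ nonSelectorTiles := by
  refine Finset.mem_union_left _ <| Finset.mem_union_right _ <|
    tileAt_mem_envelopeTiles (fun c hc => ?_) (fun c hc => ?_) hi
  · simp only [top, longLinkB, List.mem_append, List.mem_replicate,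
      List.mem_singleton] at hc
    rcases hc with ⟨-, rfl⟩ | rfl <;> simp
  · simp only [bottom, longLinkB, List.mem_cons, List.mem_replicate] at hc
    rcases hc with rfl | ⟨-, rfl⟩ <;> simp

theorem tileAt_mem_nonSelectorTiles {b : WangBar} (hb : b ∈ barsOf T)
    (hsel : b ∉ selectorBars T) (hi : i < b.len) : b.tileAt i ∈ nonSelectorTiles := by
  simp only [barsOf, linkerBars, Finset.mem_union, Finset.mem_singleton, Finset.mem_insert]
    at hb
  rcases hb with ((((rfl | hb) | rfl) | (rfl | rfl | rfl | rfl)) | hb) | hb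
  · exact tileAt_encoderBar_mem_nonSelectorTiles hi
  · exact absurd hb hsel
  · exact tileAt_alignerBar_mem_nonSelectorTiles hi
  · exact tileAt_mem_nonSelectorTiles_of_mem_unitBars (by decide) hi
  · exact tileAt_mem_nonSelectorTiles_of_mem_unitBars (by decide) hi
  · exact tileAt_longLinkA_mem_nonSelectorTiles hi
  · exact tileAt_longLinkB_mem_nonSelectorTiles hi
  · exact tileAt_mem_nonSelectorTiles_of_mem_unitBars
      (Finset.mem_union_left _ (Finset.mem_union_right _ hb)) hi
  · exact tileAt_mem_nonSelectorTiles_of_mem_unitBars (Finset.mem_union_right _ hb) hi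

end WangBar

theorem selector_must_be_used_general (T : Finset WangTile)
    (f : ℤ × ℤ → WangBar × ℕ) (hf : IsBarTiling (barsOf T) f) :
    ∃ p : ℤ × ℤ, (f p).1 ∈ selectorBars T := by
  by_contra! hsel
  have hsub : Set.range (cellTile f) ⊆ nonSelectorTiles := by
    rintro _ ⟨p, rfl⟩
    exact WangBar.tileAt_mem_nonSelectorTiles (hf.1 p) (hsel p) (hf.2.1 p)
  have hempty := hf.isSelfSupporting_range_cellTile.subset_pruneUnsupported_iterate hsub 5
  rw [pruneUnsupported_iterate_nonSelectorTiles] at hempty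
  exact Finset.notMem_empty _ (hempty ⟨(0, 0), rfl⟩)

/-- **Fact 1 (start with a selector).**  Every tiling of the plane by the
constructed set `B(T)` of 29 Wang bars uses at least one bar of the selector
group. -/
theorem selector_must_be_used (T : Finset WangTile) (hT : T.Nonempty)
    (f : ℤ × ℤ → WangBar × ℕ) (hf : IsBarTiling (barsOf T) f) :
    ∃ p : ℤ × ℤ, (f p).1 ∈ selectorBars T :=
  selector_must_be_used_general T f hf
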